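/- Let F₀ : ℝ → [0,1] be strictly increasing on its support and let 𝒳 ⊂ ℝᵖ contain a closed Euclidean ball of positive radius. Suppose F : ℝ → [0,1] is nondecreasing, β, β₀ ∈ ℝᵖ with ‖β‖₂ = ‖β₀‖₂ = 1, and F(vᵀβ) = F₀(vᵀβ₀) for all v ∈ 𝒳 − 𝒳 := {x₁ − x₂ : x₁, x₂ ∈ 𝒳}. Then β = β₀ (and hence F = F₀ on the relevant set). -/

import Mathlib

/-!
If `F` is monotone, `F₀` strictly monotone and `F ∘ ⟪·, β⟫ = F₀ ∘ ⟪·, β₀⟫` on a set containing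
`0`, then `⟪v, β⟫` and `⟪v, β₀⟫` can never have strictly opposite signs. Since `𝒳 - 𝒳` contains a
ball around `0`, we may take `v = η • (β - β₀)` with `η > 0`; for `‖β‖ = ‖β₀‖` this gives
`⟪v, β⟫ * ⟪v, β₀⟫ = -η² (‖β‖² - ⟪β, β₀⟫)² ≥ 0`, so `⟪β, β₀⟫ = ‖β‖²` and `‖β - β₀‖² = 0`.
-/

open RealInnerProductSpace
open scoped Pointwise

section Monotone

variable {α β γ : Type*} [Preorder α] [LinearOrder β] [Preorder γ]
  {F : α → γ} {G : β → γ}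

theorem le_of_monotone_of_strictMono_of_eq (hF : Monotone F) (hG : StrictMono G)
    {a b : α} {a' b' : β} (ha : F a = G a') (hb : F b = G b') (hab : a ≤ b) : a' ≤ b' := by
  by_contra! hlt
  have : F b < F a := by rw [ha, hb]; exact hG hlt
  exact (hF hab).not_gt this

end Monotone

theorem mul_nonneg_of_monotone_of_strictMono_of_eq {R γ : Type*} [Ring R] [LinearOrder R]
    [IsStrictOrderedRing R] [Preorder γ] {F G : R → γ} (hF : Monotone F) (hG : StrictMono G)
    (h0 : F 0 = G 0) {a b : R} (hab : F a = G b) : 0 ≤ a * b := by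
  rcases le_total 0 a with ha | ha
  · exact mul_nonneg ha (le_of_monotone_of_strictMono_of_eq hF hG h0 hab ha)
  · exact mul_nonneg_of_nonpos_of_nonpos ha (le_of_monotone_of_strictMono_of_eq hF hG hab h0 ha)

theorem exists_pos_smul_mem_sub_of_closedBall_subset {E : Type*} [SeminormedAddCommGroup E]
    [NormedSpace ℝ E] {s : Set E} {x₀ : E} {r : ℝ} (hr : 0 < r)
    (hs : Metric.closedBall x₀ r ⊆ s) (d : E) : ∃ η : ℝ, 0 < η ∧ η • d ∈ s - s := by
  have hsmall : ∀ᶠ η : ℝ in nhdsWithin 0 (Set.Ioi 0), η • d ∈ Metric.closedBall 0 r := by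
    have hcont : Filter.Tendsto (fun η : ℝ => η • d) (nhds 0) (nhds 0) :=
      (continuous_id.smul continuous_const).tendsto' 0 0 (zero_smul ℝ d)
    exact (hcont.mono_left nhdsWithin_le_nhds).eventually (Metric.closedBall_mem_nhds 0 hr)
  obtain ⟨η, hηd, hη⟩ := (hsmall.and self_mem_nhdsWithin).exists
  refine ⟨η, hη, Set.mem_sub.2 ⟨x₀ + η • d, hs ?_, x₀, hs (Metric.mem_closedBall_self hr.le),
    add_sub_cancel_left x₀ _⟩⟩
  simpa [dist_eq_norm] using hηd

theorem eq_of_inner_smul_sub_mul_inner_smul_sub_nonneg {E : Type*} [NormedAddCommGroup E]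
    [InnerProductSpace ℝ E] {β β₀ : E} (hnorm : ‖β‖ = ‖β₀‖) {η : ℝ} (hη : η ≠ 0)
    (h : 0 ≤ ⟪η • (β - β₀), β⟫ * ⟪η • (β - β₀), β₀⟫) : β = β₀ := by
  have hprod : ⟪η • (β - β₀), β⟫ * ⟪η • (β - β₀), β₀⟫ = -(η * (‖β‖ ^ 2 - ⟪β, β₀⟫)) ^ 2 := by
    simp only [real_inner_smul_left, inner_sub_left, real_inner_self_eq_norm_sq, hnorm,
      real_inner_comm β₀ β]
    ring
  have hinner : ⟪β, β₀⟫ = ‖β‖ ^ 2 := by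
    rw [hprod, neg_nonneg] at h
    have := pow_eq_zero_iff (n := 2) two_ne_zero |>.1 (le_antisymm h (sq_nonneg _))
    linarith [(mul_eq_zero.1 this).resolve_left hη]
  rw [← sub_eq_zero, ← norm_eq_zero, ← sq_eq_zero_iff, norm_sub_sq_real, hinner, ← hnorm]
  ring

theorem stmt17_general (p : ℕ) (F₀ F : ℝ → ℝ)
    (hF₀mono : StrictMono F₀)
    (hFmono : Monotone F)
    (𝒳 : Set (EuclideanSpace ℝ (Fin p)))
    (hball : ∃ (x₀ : EuclideanSpace ℝ (Fin p)) (r : ℝ), 0 < r ∧ Metric.closedBall x₀ r ⊆ 𝒳)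
    (β β₀ : EuclideanSpace ℝ (Fin p)) (hβ : ‖β‖ = 1) (hβ₀ : ‖β₀‖ = 1)
    (heq : ∀ x₁ ∈ 𝒳, ∀ x₂ ∈ 𝒳, F ⟪x₁ - x₂, β⟫ = F₀ ⟪x₁ - x₂, β₀⟫) :
    β = β₀ := by
  obtain ⟨x₀, r, hr, hsub⟩ := hball
  have hx₀ : x₀ ∈ 𝒳 := hsub (Metric.mem_closedBall_self hr.le)
  have h0 : F 0 = F₀ 0 := by simpa using heq x₀ hx₀ x₀ hx₀
  obtain ⟨η, hη, hv⟩ := exists_pos_smul_mem_sub_of_closedBall_subset hr hsub (β - β₀)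
  obtain ⟨x₁, hx₁, x₂, hx₂, hx⟩ := Set.mem_sub.1 hv
  have hv_eq := heq x₁ hx₁ x₂ hx₂
  rw [hx] at hv_eq
  exact eq_of_inner_smul_sub_mul_inner_smul_sub_nonneg (hβ.trans hβ₀.symm) hη.ne'
    (mul_nonneg_of_monotone_of_strictMono_of_eq hFmono hF₀mono h0 hv_eq)

/-- Identifiability: if F₀ : ℝ → [0,1] is strictly increasing, 𝒳 ⊆ ℝᵖ contains a closed
ball of positive radius, F : ℝ → [0,1] is nondecreasing, β, β₀ are unit vectors and
F((x₁ − x₂)ᵀβ) = F₀((x₁ − x₂)ᵀβ₀) for all x₁, x₂ ∈ 𝒳, then β = β₀. -/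
theorem stmt17 (p : ℕ) (F₀ F : ℝ → ℝ)
    (hF₀mono : StrictMono F₀) (hF₀range : ∀ t, F₀ t ∈ Set.Icc (0 : ℝ) 1)
    (hFmono : Monotone F) (hFrange : ∀ t, F t ∈ Set.Icc (0 : ℝ) 1)
    (𝒳 : Set (EuclideanSpace ℝ (Fin p)))
    (hball : ∃ (x₀ : EuclideanSpace ℝ (Fin p)) (r : ℝ), 0 < r ∧ Metric.closedBall x₀ r ⊆ 𝒳)
    (β β₀ : EuclideanSpace ℝ (Fin p)) (hβ : ‖β‖ = 1) (hβ₀ : ‖β₀‖ = 1)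
    (heq : ∀ x₁ ∈ 𝒳, ∀ x₂ ∈ 𝒳, F ⟪x₁ - x₂, β⟫ = F₀ ⟪x₁ - x₂, β₀⟫) :
    β = β₀ :=
  stmt17_general p F₀ F hF₀mono hFmono 𝒳 hball β β₀ hβ hβ₀ heq
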